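/- Serre's p-adic Sato–Tate measure μ_p = ((p+1)/π) · √(1 - x²/4) / ((p^{1/2} + p^{-1/2})² - x²) dx is a probability measure on [-2,2], for every real p > 1. -/

import Mathlib

/-!
Put `s = √p`, `a = s + s⁻¹`, so that `a² - 4 = (s - s⁻¹)²`. For `0 < r < a` and
`b = √(a² - r²)`, the function `arcsin (x / r) - (b / a) · arcsin (b x / (r √(a² - x²)))` is an
odd antiderivative of `√(r² - x²) / (a² - x²)` on `[-r, r]`; its value `π/2 · (1 - b/a)` at `r` gives
`∫_{-r}^{r} √(r² - x²) / (a² - x²) dx = π (1 - b / a)`. For `r = 2` this is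
`π · (2/s) / (s + s⁻¹) = 2π / (p + 1)`, which cancels the normalisation `(p + 1) / (2π)`.
-/

open MeasureTheory Real

noncomputable def sqrtDivSqSubSqAntideriv (r a x : ℝ) : ℝ :=
  arcsin (x / r) - √(a ^ 2 - r ^ 2) / a * arcsin (√(a ^ 2 - r ^ 2) * x / (r * √(a ^ 2 - x ^ 2)))

section

variable {r a x : ℝ}

theorem sqrtDivSqSubSqAntideriv_neg (r a x : ℝ) :
    sqrtDivSqSubSqAntideriv r a (-x) = -sqrtDivSqSubSqAntideriv r a x := by
  simp only [sqrtDivSqSubSqAntideriv, neg_sq, neg_div, mul_neg, arcsin_neg]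
  ring

theorem sqrtDivSqSubSqAntideriv_self (hr : 0 < r) (hra : r < a) :
    sqrtDivSqSubSqAntideriv r a r = π / 2 * (1 - √(a ^ 2 - r ^ 2) / a) := by
  have hb : 0 < √(a ^ 2 - r ^ 2) := sqrt_pos.2 (by nlinarith)
  rw [sqrtDivSqSubSqAntideriv, div_self hr.ne', mul_comm r, div_self (by positivity),
    arcsin_one]
  ring

theorem hasDerivAt_arcsin_div (hx : |x| < r) :
    HasDerivAt (fun y => arcsin (y / r)) (1 / √(r ^ 2 - x ^ 2)) x := by
  have hr : 0 < r := (abs_nonneg x).trans_lt hx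
  obtain ⟨hlo, hhi⟩ := abs_lt.1 hx
  have h := (hasDerivAt_arcsin (x := x / r) (by rw [ne_eq, div_eq_iff hr.ne']; linarith)
    (by rw [ne_eq, div_eq_iff hr.ne']; linarith)).comp x ((hasDerivAt_id x).div_const r)
  refine h.congr_deriv ?_
  have : √(1 - (x / r) ^ 2) = √(r ^ 2 - x ^ 2) / r := by
    rw [← sqrt_sq hr.le, ← sqrt_div' _ (sq_nonneg r), sqrt_sq hr.le]
    congr 1
    field_simp
  rw [this]
  field_simp

theorem hasDerivAt_sqrt_sq_sub_sq (hx : |x| < a) :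
    HasDerivAt (fun y => √(a ^ 2 - y ^ 2)) (-x / √(a ^ 2 - x ^ 2)) x := by
  have hpos : 0 < a ^ 2 - x ^ 2 := by nlinarith [sq_abs x, abs_nonneg x]
  have h := (hasDerivAt_sqrt hpos.ne').comp x ((hasDerivAt_pow 2 x).const_sub (a ^ 2))
  refine h.congr_deriv ?_
  field_simp
  norm_num

theorem hasDerivAt_mul_div_sqrt_sq_sub_sq (c : ℝ) (hr : r ≠ 0) (hx : |x| < a) :
    HasDerivAt (fun y => c * y / (r * √(a ^ 2 - y ^ 2)))
      (c * a ^ 2 / (r * √(a ^ 2 - x ^ 2) * (a ^ 2 - x ^ 2))) x := by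
  have hpos : 0 < a ^ 2 - x ^ 2 := by nlinarith [sq_abs x, abs_nonneg x]
  have hT : 0 < √(a ^ 2 - x ^ 2) := sqrt_pos.2 hpos
  have hT2 : √(a ^ 2 - x ^ 2) ^ 2 = a ^ 2 - x ^ 2 := sq_sqrt hpos.le
  have h := ((hasDerivAt_id x).const_mul c).div
    ((hasDerivAt_sqrt_sq_sub_sq hx).const_mul r) (by positivity)
  refine h.congr_deriv ?_
  simp only [id]
  field_simp
  linear_combination (-(c * x ^ 2)) * hT2

theorem hasDerivAt_arcsin_mul_div_sqrt_sq_sub_sq (hx : |x| < r) (hra : r < a) :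
    HasDerivAt (fun y => arcsin (√(a ^ 2 - r ^ 2) * y / (r * √(a ^ 2 - y ^ 2))))
      (a * √(a ^ 2 - r ^ 2) / (√(r ^ 2 - x ^ 2) * (a ^ 2 - x ^ 2))) x := by
  have hr : 0 < r := (abs_nonneg x).trans_lt hx
  have hxa : |x| < a := hx.trans hra
  have hx2 : x ^ 2 < r ^ 2 := sq_lt_sq' (abs_lt.1 hx).1 (abs_lt.1 hx).2
  have ha : 0 < a := hr.trans hra
  set b := √(a ^ 2 - r ^ 2)
  set S := √(r ^ 2 - x ^ 2)
  set T := √(a ^ 2 - x ^ 2)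
  have hb2 : b ^ 2 = a ^ 2 - r ^ 2 := sq_sqrt (by nlinarith)
  have hS : 0 < S := sqrt_pos.2 (by linarith)
  have hS2 : S ^ 2 = r ^ 2 - x ^ 2 := sq_sqrt (by linarith)
  have hT : 0 < T := sqrt_pos.2 (by nlinarith)
  have hT2 : T ^ 2 = a ^ 2 - x ^ 2 := sq_sqrt (by nlinarith)
  have hsq : 1 - (b * x / (r * T)) ^ 2 = (a * S / (r * T)) ^ 2 := by
    field_simp
    linear_combination (-x ^ 2) * hb2 + r ^ 2 * hT2 - a ^ 2 * hS2
  have hg : |b * x / (r * T)| < 1 := by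
    rw [← sq_lt_one_iff_abs_lt_one, ← sub_pos, hsq]
    positivity
  obtain ⟨hg₁, hg₂⟩ := abs_lt.1 hg
  have h := (hasDerivAt_arcsin hg₁.ne' hg₂.ne).comp x
    (hasDerivAt_mul_div_sqrt_sq_sub_sq b hr.ne' hxa)
  refine h.congr_deriv ?_
  change _ * (b * a ^ 2 / (r * T * (a ^ 2 - x ^ 2))) = _
  rw [hsq, sqrt_sq (by positivity)]
  field_simp

theorem hasDerivAt_sqrtDivSqSubSqAntideriv (hx : |x| < r) (hra : r < a) :
    HasDerivAt (sqrtDivSqSubSqAntideriv r a) (√(r ^ 2 - x ^ 2) / (a ^ 2 - x ^ 2)) x := by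
  have hr : 0 < r := (abs_nonneg x).trans_lt hx
  have hx2 : x ^ 2 < r ^ 2 := sq_lt_sq' (abs_lt.1 hx).1 (abs_lt.1 hx).2
  have ha : 0 < a := hr.trans hra
  have hb2 : √(a ^ 2 - r ^ 2) ^ 2 = a ^ 2 - r ^ 2 := sq_sqrt (by nlinarith)
  have hS : 0 < √(r ^ 2 - x ^ 2) := sqrt_pos.2 (by linarith)
  have hS2 : √(r ^ 2 - x ^ 2) ^ 2 = r ^ 2 - x ^ 2 := sq_sqrt (by linarith)
  have hax : 0 < a ^ 2 - x ^ 2 := by nlinarith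
  refine ((hasDerivAt_arcsin_div hx).sub
    ((hasDerivAt_arcsin_mul_div_sqrt_sq_sub_sq hx hra).const_mul _)).congr_deriv ?_
  field_simp
  linear_combination -hb2 - hS2

theorem continuousOn_sqrtDivSqSubSqAntideriv (hr : 0 < r) (hra : r < a) :
    ContinuousOn (sqrtDivSqSubSqAntideriv r a) (Set.Icc (-r) r) := by
  have hden : ∀ x ∈ Set.Icc (-r) r, r * √(a ^ 2 - x ^ 2) ≠ 0 := fun x hx ↦
    mul_ne_zero hr.ne' (sqrt_ne_zero'.2 (by nlinarith [hx.1, hx.2]))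
  exact (continuous_arcsin.comp_continuousOn (by fun_prop)).sub (continuousOn_const.mul
    (continuous_arcsin.comp_continuousOn (ContinuousOn.div (by fun_prop) (by fun_prop) hden)))

theorem integral_sqrt_sq_sub_sq_div_sq_sub_sq (hr : 0 < r) (hra : r < a) :
    ∫ x in -r..r, √(r ^ 2 - x ^ 2) / (a ^ 2 - x ^ 2) = π * (1 - √(a ^ 2 - r ^ 2) / a) := by
  have hpos : ∀ x ∈ Set.Icc (-r) r, a ^ 2 - x ^ 2 ≠ 0 := fun x hx ↦ by
    nlinarith [hx.1, hx.2]
  rw [intervalIntegral.integral_eq_sub_of_hasDeriv_right_of_le (by linarith)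
    (continuousOn_sqrtDivSqSubSqAntideriv hr hra)
    (fun x hx ↦ (hasDerivAt_sqrtDivSqSubSqAntideriv (abs_lt.2 hx) hra).hasDerivWithinAt)
    ((ContinuousOn.div (by fun_prop) (by fun_prop) hpos).intervalIntegrable_of_Icc
      (by linarith)),
    sqrtDivSqSubSqAntideriv_neg, sqrtDivSqSubSqAntideriv_self hr hra]
  ring

end

/-- Serre's `p`-adic Sato–Tate measure
`μ_p = ((p+1)/π) · √(1 - x²/4) / ((p^{1/2} + p^{-1/2})² - x²) dx`
is a probability measure on `[-2,2]`, for every real `p > 1`. -/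
theorem serre_padic_satoTate_total_mass_one (p : ℝ) (hp : 1 < p) :
    ∫ x in (-2 : ℝ)..2,
      ((p + 1) / π) * Real.sqrt (1 - x ^ 2 / 4) /
        ((Real.sqrt p + (Real.sqrt p)⁻¹) ^ 2 - x ^ 2) = 1 := by
  obtain ⟨s, hs, rfl⟩ : ∃ s, 1 < s ∧ s ^ 2 = p :=
    ⟨√p, by simpa using sqrt_lt_sqrt zero_le_one hp, sq_sqrt (by linarith)⟩
  have hs0 : 0 < s := by linarith
  have hsinv : s⁻¹ < 1 := inv_lt_one_of_one_lt₀ hs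
  have ha : 2 < s + s⁻¹ := by
    rw [← sub_pos, show s + s⁻¹ - 2 = (s - 1) ^ 2 / s by field_simp; ring]
    exact div_pos (pow_pos (sub_pos.2 hs) 2) hs0
  have hsqrt : √((s + s⁻¹) ^ 2 - 2 ^ 2) = s - s⁻¹ := by
    rw [show (s + s⁻¹) ^ 2 - 2 ^ 2 = (s - s⁻¹) ^ 2 by field_simp; ring]
    exact sqrt_sq (by linarith)
  have hhalf : ∀ x : ℝ, √(1 - x ^ 2 / 4) = √(2 ^ 2 - x ^ 2) / 2 := fun x ↦ by
    rw [show 1 - x ^ 2 / 4 = (2 ^ 2 - x ^ 2) / 2 ^ 2 by ring, sqrt_div' _ (by positivity),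
      sqrt_sq zero_le_two]
  calc _ = (s ^ 2 + 1) / (2 * π) *
        ∫ x in (-2 : ℝ)..2, √(2 ^ 2 - x ^ 2) / ((s + s⁻¹) ^ 2 - x ^ 2) := by
        rw [← intervalIntegral.integral_const_mul, sqrt_sq hs0.le]
        congr 1 with x
        rw [hhalf]
        ring
    _ = (s ^ 2 + 1) / (2 * π) * (π * (1 - (s - s⁻¹) / (s + s⁻¹))) := by
        rw [integral_sqrt_sq_sub_sq_div_sq_sub_sq two_pos ha, hsqrt]
    _ = 1 := by
        field_simp
        ring
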